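/- arXiv:1504.07053 — 3 statements merged into one kernel-verified Lean document; each statement's English description precedes it below -/
import Mathlib

section
/- Let B_H be the standard fractional Brownian motion with Hurst index H ∈ (0,1), i.e. the centered Gaussian process with covariance Cov(B_H(s),B_H(t)) = (t^{2H} + s^{2H} − |t−s|^{2H})/2. Then the normalized process B_H(t)/t^H, t ∈ (0,∞), is locally stationary: for every compact interval I ⊂ (0,∞), lim_{h→0} ( 1 − Corr( B_H(t)/t^H, B_H(t+h)/(t+h)^H ) ) / |h|^{2H} = 1/(2 t^{2H}) uniformly in t ∈ I. -/
open MeasureTheory ProbabilityTheory Filter Set Real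

noncomputable section

lemma rpow_lip {H c : ℝ} (hH0 : 0 < H) (hH1 : H ≤ 1) (hc : 0 < c) {x y : ℝ}
    (hx : c ≤ x) (hy : c ≤ y) : |x ^ H - y ^ H| ≤ H * c ^ (H - 1) * |x - y| := by
  have key := Convex.norm_image_sub_le_of_norm_hasDerivWithin_le
    (f := fun z : ℝ => z ^ H) (f' := fun z : ℝ => H * z ^ (H - 1))
    (s := Ici c) (C := H * c ^ (H - 1)) ?_ ?_ (convex_Ici c) hy hx
  · simpa [Real.norm_eq_abs, abs_sub_comm] using key
  · intro z hz
    exact (Real.hasDerivAt_rpow_const (Or.inl (ne_of_gt (lt_of_lt_of_le hc hz)))).hasDerivWithinAt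
  · intro z hz
    have hz0 : 0 < z := lt_of_lt_of_le hc hz
    have h2 : z ^ (H - 1) ≤ c ^ (H - 1) :=
      Real.rpow_le_rpow_of_nonpos hc hz (by linarith)
    have h1 : 0 ≤ z ^ (H - 1) := (Real.rpow_pos_of_pos hz0 _).le
    calc ‖H * z ^ (H - 1)‖ = H * z ^ (H - 1) := by
          rw [Real.norm_eq_abs, abs_of_nonneg (by positivity)]
      _ ≤ H * c ^ (H - 1) := by nlinarith

lemma rpow_two_mul {H : ℝ} {x : ℝ} (hx : 0 ≤ x) : x ^ (2 * H) = (x ^ H) ^ 2 := by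
  rw [show (2 * H) = H * 2 by ring, Real.rpow_mul hx, Real.rpow_two]

-- core algebraic estimate
lemma core_est {u v w u0 v0 M N : ℝ} (hu0 : 0 < u0) (hv0 : 0 < v0)
    (hu : u0 ≤ u) (hv : v0 ≤ v) (hw : 0 < w)
    (hM : |v - u| ≤ M) (hN : (u - v) ^ 2 / w ^ 2 ≤ N) :
    |(1 - (u ^ 2 + v ^ 2 - w ^ 2) / 2 / (v * u)) / w ^ 2 - 1 / (2 * v ^ 2)| ≤
      M / (2 * u0 * v0 ^ 2) + N / (2 * u0 * v0) := by
  have hu' : 0 < u := lt_of_lt_of_le hu0 hu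
  have hv' : 0 < v := lt_of_lt_of_le hv0 hv
  have hid : (1 - (u ^ 2 + v ^ 2 - w ^ 2) / 2 / (v * u)) / w ^ 2 - 1 / (2 * v ^ 2)
      = (v - u) / (2 * u * v ^ 2) - ((u - v) ^ 2 / w ^ 2) / (2 * u * v) := by
    field_simp
    ring
  rw [hid]
  have h1 : |(v - u) / (2 * u * v ^ 2)| ≤ M / (2 * u0 * v0 ^ 2) := by
    rw [abs_div, abs_of_nonneg (by positivity : (0:ℝ) ≤ 2 * u * v ^ 2)]
    apply div_le_div₀ (le_trans (abs_nonneg _) hM) hM (by positivity)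
    gcongr
  have h2 : |((u - v) ^ 2 / w ^ 2) / (2 * u * v)| ≤ N / (2 * u0 * v0) := by
    rw [abs_div, abs_of_nonneg (by positivity : (0:ℝ) ≤ (u - v) ^ 2 / w ^ 2),
      abs_of_nonneg (by positivity : (0:ℝ) ≤ 2 * u * v)]
    apply div_le_div₀ (le_trans (by positivity) hN) hN (by positivity)
    gcongr
  calc |(v - u) / (2 * u * v ^ 2) - ((u - v) ^ 2 / w ^ 2) / (2 * u * v)|
      ≤ |(v - u) / (2 * u * v ^ 2)| + |((u - v) ^ 2 / w ^ 2) / (2 * u * v)| :=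
        abs_sub _ _
    _ ≤ M / (2 * u0 * v0 ^ 2) + N / (2 * u0 * v0) := add_le_add h1 h2


/-- `X` is a centered Gaussian process on the index set `T` under the probability
measure `P`: every finite linear combination of its values is a centered Gaussian
random variable. -/
def IsCenteredGaussianProcess {Ω : Type} [MeasurableSpace Ω] (P : Measure Ω)
    (T : Set ℝ) (X : ℝ → Ω → ℝ) : Prop :=
  (∀ t ∈ T, Measurable (X t)) ∧
  ∀ (m : ℕ) (ts : Fin m → ℝ) (c : Fin m → ℝ), (∀ i, ts i ∈ T) →
    ∃ v : NNReal,
      Measure.map (fun ω => ∑ i, c i * X (ts i) ω) P = gaussianReal 0 v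

/-- a family of processes is (mutually) independent if the generated path-valued random
variables are independent. -/
def IndepProcesses {Ω : Type} [MeasurableSpace Ω] (P : Measure Ω) {ι : Type}
    (X : ι → ℝ → Ω → ℝ) : Prop :=
  iIndepFun (m := fun _ : ι => (inferInstance : MeasurableSpace (ℝ → ℝ)))
    (fun i ω => fun t => X i t ω) P

/-- `K` is regularly varying at `0⁺` with index `ρ`. -/
def RegularVaryingAtZero (K : ℝ → ℝ) (ρ : ℝ) : Prop :=
  ∀ l : ℝ, 0 < l →
    Tendsto (fun t => K (l * t) / K t) (nhdsWithin 0 (Ioi 0)) (nhds (l ^ ρ))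

/-- the generalized inverse of a function `K` defined near `0⁺`. -/
def genInv (K : ℝ → ℝ) (y : ℝ) : ℝ := sInf {t : ℝ | 0 < t ∧ y ≤ K t}

/-- `BH` is a standard fractional Brownian motion with Hurst index `H` on `[0,∞)`,
with a.s. continuous sample paths. -/
def IsStdFBM {Ω : Type} [MeasurableSpace Ω] (P : Measure Ω) (H : ℝ)
    (BH : ℝ → Ω → ℝ) : Prop :=
  IsCenteredGaussianProcess P (Ici 0) BH ∧
  (∀ᵐ ω ∂P, ContinuousOn (fun t => BH t ω) (Ici 0)) ∧
  ∀ s ∈ Ici (0:ℝ), ∀ t ∈ Ici (0:ℝ),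
    ∫ ω, BH s ω * BH t ω ∂P = (t ^ (2*H) + s ^ (2*H) - |t - s| ^ (2*H)) / 2

/-- **Local stationarity of the normalized fBm** (equation (1.5)): for every compact
interval `[a,b] ⊂ (0,∞)`,
`(1 − Corr(B_H(t)/t^H, B_H(t+h)/(t+h)^H)) / |h|^{2H} → 1/(2 t^{2H})`
uniformly in `t ∈ [a,b]` as `h → 0`.  Since the normalized fBm has unit variance, its
correlation is `E[(B_H(t)/t^H)(B_H(t+h)/(t+h)^H)]`. -/
theorem normalized_fbm_locally_stationary
    (Ω : Type) (_ : MeasurableSpace Ω) (P : Measure Ω) (_ : IsProbabilityMeasure P)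
    (H : ℝ) (hH0 : 0 < H) (hH1 : H < 1)
    (BH : ℝ → Ω → ℝ) (hBH : IsStdFBM P H BH)
    (a b : ℝ) (ha : 0 < a) (hab : a ≤ b) :
    TendstoUniformlyOn
      (fun h t =>
        (1 - ∫ ω, (BH t ω / t ^ H) * (BH (t + h) ω / (t + h) ^ H) ∂P) / |h| ^ (2 * H))
      (fun t => 1 / (2 * t ^ (2 * H)))
      (nhdsWithin 0 {h : ℝ | h ≠ 0}) (Icc a b) := by
  set L : ℝ := H * (a / 2) ^ (H - 1) with hL
  set u0 : ℝ := (a / 2) ^ H with hu0def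
  set v0 : ℝ := a ^ H with hv0def
  have hu0 : 0 < u0 := Real.rpow_pos_of_pos (half_pos ha) _
  have hv0 : 0 < v0 := Real.rpow_pos_of_pos ha _
  set B : ℝ → ℝ := fun h =>
    L * |h| / (2 * u0 * v0 ^ 2) + L ^ 2 * |h| ^ (2 - 2 * H) / (2 * u0 * v0) with hBdef
  -- B tends to 0 at 0
  have t1 : Tendsto (fun h : ℝ => |h|) (nhds 0) (nhds 0) := by
    simpa using continuous_abs.tendsto (0 : ℝ)
  have t2 : Tendsto (fun h : ℝ => |h| ^ (2 - 2 * H)) (nhds 0) (nhds 0) := by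
    have hc : ContinuousAt (fun x : ℝ => x ^ (2 - 2 * H)) 0 :=
      Real.continuousAt_rpow_const 0 _ (Or.inr (by linarith))
    have := hc.tendsto.comp t1
    simpa [Function.comp_def, Real.zero_rpow (ne_of_gt (show (0:ℝ) < 2 - 2 * H by linarith))] using this
  have hBt : Tendsto B (nhdsWithin 0 {h : ℝ | h ≠ 0}) (nhds 0) := by
    have : Tendsto B (nhds 0) (nhds 0) := by
      have h1 := ((t1.const_mul L).div_const (2 * u0 * v0 ^ 2)).add
        ((t2.const_mul (L ^ 2)).div_const (2 * u0 * v0))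
      simpa [hBdef] using h1
    exact this.mono_left nhdsWithin_le_nhds
  rw [Metric.tendstoUniformlyOn_iff]
  intro ε hε
  have hB : ∀ᶠ h in nhdsWithin 0 {h : ℝ | h ≠ 0}, B h < ε :=
    hBt.eventually_lt_const hε
  have hsmall : ∀ᶠ h in nhdsWithin 0 {h : ℝ | h ≠ 0}, |h| < a / 2 :=
    (t1.mono_left nhdsWithin_le_nhds).eventually_lt_const (half_pos ha)
  filter_upwards [hB, hsmall, eventually_mem_nhdsWithin] with h hBh hsm hne
  intro t ht
  obtain ⟨hta, htb⟩ := ht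
  have ht0 : 0 < t := lt_of_lt_of_le ha hta
  have hhne : h ≠ 0 := hne
  have habs : 0 < |h| := abs_pos.mpr hhne
  have hth : a / 2 ≤ t + h := by
    have := abs_lt.mp hsm
    linarith [this.1]
  have hth0 : 0 < t + h := lt_of_lt_of_le (by positivity) hth
  -- compute the integral
  have hint : (∫ ω, (BH t ω / t ^ H) * (BH (t + h) ω / (t + h) ^ H) ∂P)
      = ((t + h) ^ (2 * H) + t ^ (2 * H) - |h| ^ (2 * H)) / 2 / (t ^ H * (t + h) ^ H) := by
    have hcov := hBH.2.2 t ht0.le (t + h) hth0.le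
    calc (∫ ω, (BH t ω / t ^ H) * (BH (t + h) ω / (t + h) ^ H) ∂P)
        = ∫ ω, (t ^ H * (t + h) ^ H)⁻¹ * (BH t ω * BH (t + h) ω) ∂P := by
          congr 1; funext ω; ring
      _ = (t ^ H * (t + h) ^ H)⁻¹ * ∫ ω, BH t ω * BH (t + h) ω ∂P :=
          integral_const_mul _ _
      _ = ((t + h) ^ (2 * H) + t ^ (2 * H) - |h| ^ (2 * H)) / 2 / (t ^ H * (t + h) ^ H) := by
          rw [hcov, add_sub_cancel_left, inv_mul_eq_div]
  rw [Real.dist_eq, hint, abs_sub_comm]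
  rw [rpow_two_mul hth0.le, rpow_two_mul ht0.le, rpow_two_mul (abs_nonneg h)]
  -- hM
  have hM : |t ^ H - (t + h) ^ H| ≤ L * |h| := by
    have := rpow_lip hH0 hH1.le (half_pos ha) (by linarith : a / 2 ≤ t) hth
    simpa [abs_sub_comm, show t - (t + h) = -h by ring, abs_neg] using this
  -- hN
  have hN : ((t + h) ^ H - t ^ H) ^ 2 / (|h| ^ H) ^ 2 ≤ L ^ 2 * |h| ^ (2 - 2 * H) := by
    have hsq : ((t + h) ^ H - t ^ H) ^ 2 ≤ (L * |h|) ^ 2 := by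
      nlinarith [sq_abs (t ^ H - (t + h) ^ H), abs_nonneg (t ^ H - (t + h) ^ H)]
    have hrw : L ^ 2 * |h| ^ (2 - 2 * H) = (L * |h|) ^ 2 / (|h| ^ H) ^ 2 := by
      rw [Real.rpow_sub habs, Real.rpow_two, ← rpow_two_mul (abs_nonneg h)]
      field_simp
    rw [hrw]
    gcongr
  have key := core_est hu0 hv0
    (Real.rpow_le_rpow (by positivity) hth hH0.le)
    (Real.rpow_le_rpow (by positivity) hta hH0.le)
    (Real.rpow_pos_of_pos habs H) hM hN
  calc |(1 - (((t + h) ^ H) ^ 2 + (t ^ H) ^ 2 - (|h| ^ H) ^ 2) / 2 / (t ^ H * (t + h) ^ H)) /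
        (|h| ^ H) ^ 2 - 1 / (2 * (t ^ H) ^ 2)|
      ≤ L * |h| / (2 * u0 * v0 ^ 2) + L ^ 2 * |h| ^ (2 - 2 * H) / (2 * u0 * v0) := key
    _ = B h := rfl
    _ < ε := hBh
end
end

section
/- For ν > 0 let g_ν(t) = c(t) + ν ln(1 + c²(t)) with c(t) = ln(1 − ln(4t(1−t))), t ∈ (0,1). Then as t → 0, g_ν(t) ∼ ln ln(1/t) and (g_ν(t))^{1/2} e^{−g_ν(t)} / (t(1−t)) ∼ 1 / ( t ln(1/t) (ln ln(1/t))^{2ν−1/2} ); consequently ∫_0^{1/2} (g_ν(t))^{1/2} e^{−g_ν(t)} / (t(1−t)) dt < ∞ if and only if ν > 3/4. -/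
open MeasureTheory Filter Set Real Topology

noncomputable section

/-- `c(t) = ln(1 − ln(4t(1−t)))`. -/
def cTrend (t : ℝ) : ℝ := Real.log (1 - Real.log (4 * t * (1 - t)))

/-- the trend function `g_ν(t) = c(t) + ν ln(1 + c(t)²)`. -/
def gTrend (ν t : ℝ) : ℝ := cTrend t + ν * Real.log (1 + (cTrend t) ^ 2)

lemma arg_mem (t : ℝ) (ht : t ∈ Ioo (0:ℝ) (1/2)) : 0 < 4*t*(1-t) ∧ 4*t*(1-t) < 1 := by
  obtain ⟨h1, h2⟩ := ht
  constructor
  · nlinarith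
  · nlinarith [sq_nonneg (1 - 2*t)]

lemma A_gt_one (t : ℝ) (ht : t ∈ Ioo (0:ℝ) (1/2)) : 1 < 1 - Real.log (4*t*(1-t)) := by
  obtain ⟨h1, h2⟩ := arg_mem t ht
  have := Real.log_neg h1 h2
  linarith

lemma A_eq (t : ℝ) (ht : t ∈ Ioo (0:ℝ) (1/2)) :
    1 - Real.log (4*t*(1-t)) = Real.log (1/t) + (1 - Real.log 4 - Real.log (1-t)) := by
  obtain ⟨h1, h2⟩ := ht
  rw [Real.log_mul (by positivity) (by linarith), Real.log_mul (by norm_num) (by linarith),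
    one_div, Real.log_inv]
  ring

lemma tendsto_L : Tendsto (fun t : ℝ => Real.log (1/t)) (𝓝[>] 0) atTop := by
  have h : Tendsto (fun t : ℝ => Real.log t⁻¹) (𝓝[>] (0:ℝ)) atTop :=
    Real.tendsto_log_atTop.comp tendsto_inv_nhdsGT_zero
  simpa only [one_div] using h

lemma tendsto_LL : Tendsto (fun t : ℝ => Real.log (Real.log (1/t))) (𝓝[>] 0) atTop :=
  Real.tendsto_log_atTop.comp tendsto_L

lemma mem_eventually : ∀ᶠ t in (𝓝[>] (0:ℝ)), t ∈ Ioo (0:ℝ) (1/2) :=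
  Ioo_mem_nhdsGT_of_mem (by norm_num)

lemma tendsto_AdivL :
    Tendsto (fun t : ℝ => (1 - Real.log (4*t*(1-t))) / Real.log (1/t)) (𝓝[>] 0) (𝓝 1) := by
  have h1 : Tendsto (fun t : ℝ => (1 - Real.log 4 - Real.log (1-t)) / Real.log (1/t))
      (𝓝[>] 0) (𝓝 0) := by
    have hcont : ContinuousAt (fun t : ℝ => 1 - Real.log 4 - Real.log (1-t)) 0 := by
      apply ContinuousAt.sub continuousAt_const
      exact (Real.continuousAt_log (by norm_num)).comp (by fun_prop)
    exact Tendsto.div_atTop (hcont.tendsto.mono_left nhdsWithin_le_nhds) tendsto_L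
  have heq : ∀ᶠ t in (𝓝[>] (0:ℝ)),
      1 + (1 - Real.log 4 - Real.log (1-t)) / Real.log (1/t)
        = (1 - Real.log (4*t*(1-t))) / Real.log (1/t) := by
    filter_upwards [mem_eventually, tendsto_L.eventually_gt_atTop 0] with t ht hL
    rw [A_eq t ht]
    field_simp
  have := (tendsto_const_nhds (x := (1:ℝ)) (f := 𝓝[>] (0:ℝ))).add h1
  rw [add_zero] at this
  exact Tendsto.congr' heq this

lemma tendsto_c_sub_LL :
    Tendsto (fun t : ℝ => cTrend t - Real.log (Real.log (1/t))) (𝓝[>] 0) (𝓝 0) := by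
  have h1 : Tendsto (fun t : ℝ => Real.log ((1 - Real.log (4*t*(1-t))) / Real.log (1/t)))
      (𝓝[>] 0) (𝓝 0) := by
    have := (Real.continuousAt_log one_ne_zero).tendsto.comp tendsto_AdivL
    simpa [Function.comp_def] using this
  apply Tendsto.congr' _ h1
  filter_upwards [mem_eventually, tendsto_L.eventually_gt_atTop 0] with t ht hL
  rw [Real.log_div (by have := A_gt_one t ht; linarith) (ne_of_gt hL)]
  rfl

lemma tendsto_c : Tendsto (fun t : ℝ => cTrend t) (𝓝[>] 0) atTop := by
  have := tendsto_LL.atTop_add (tendsto_c_sub_LL)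
  simpa using this

lemma tendsto_c_div_LL :
    Tendsto (fun t : ℝ => cTrend t / Real.log (Real.log (1/t))) (𝓝[>] 0) (𝓝 1) := by
  have h1 := Tendsto.div_atTop tendsto_c_sub_LL tendsto_LL
  have h2 := (tendsto_const_nhds (x := (1:ℝ)) (f := (𝓝[>] (0:ℝ)))).add h1
  rw [add_zero] at h2
  apply Tendsto.congr' _ h2
  filter_upwards [tendsto_LL.eventually_gt_atTop 0] with t hLL
  field_simp
  ring

lemma tendsto_log_one_add_sq_div :
    Tendsto (fun x : ℝ => Real.log (1 + x^2) / x) atTop (𝓝 0) := by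
  have hb : Tendsto (fun x : ℝ => (Real.log 2 + 2 * Real.log x) / x) atTop (𝓝 0) := by
    have h1 : Tendsto (fun x : ℝ => Real.log 2 / x) atTop (𝓝 0) :=
      tendsto_const_nhds.div_atTop tendsto_id
    have h2 : Tendsto (fun x : ℝ => 2 * (Real.log x / x)) atTop (𝓝 (2 * 0)) :=
      (Real.isLittleO_log_id_atTop.tendsto_div_nhds_zero).const_mul 2
    have := h1.add h2
    rw [mul_zero, add_zero] at this
    apply this.congr
    intro x
    ring
  apply tendsto_of_tendsto_of_tendsto_of_le_of_le' tendsto_const_nhds hb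
  · filter_upwards [eventually_ge_atTop (1:ℝ)] with x hx
    have h0 : (0:ℝ) ≤ Real.log (1 + x^2) := Real.log_nonneg (by nlinarith)
    have hx0 : (0:ℝ) < x := by linarith
    positivity
  · filter_upwards [eventually_ge_atTop (1:ℝ)] with x hx
    have hx0 : (0:ℝ) < x := by linarith
    have h1 : (1:ℝ) + x^2 ≤ 2 * x^2 := by nlinarith
    have h2 : Real.log (1 + x^2) ≤ Real.log (2 * x^2) := Real.log_le_log (by positivity) h1
    rw [Real.log_mul (by norm_num) (by positivity), Real.log_pow] at h2
    have h3 : Real.log (1 + x^2) ≤ Real.log 2 + 2 * Real.log x := by push_cast at h2 ⊢; linarith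
    exact div_le_div_of_nonneg_right h3 hx0.le

lemma tendsto_g_div_c (ν : ℝ) :
    Tendsto (fun t : ℝ => gTrend ν t / cTrend t) (𝓝[>] 0) (𝓝 1) := by
  have h1 : Tendsto (fun t : ℝ => Real.log (1 + (cTrend t)^2) / cTrend t) (𝓝[>] 0) (𝓝 0) :=
    tendsto_log_one_add_sq_div.comp tendsto_c
  have h2 := (tendsto_const_nhds (x := (1:ℝ)) (f := (𝓝[>] (0:ℝ)))).add (h1.const_mul ν)
  rw [mul_zero, add_zero] at h2
  apply Tendsto.congr' _ h2
  filter_upwards [tendsto_c.eventually_gt_atTop 0] with t hc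
  simp only [gTrend]
  field_simp

lemma part1 (ν : ℝ) :
    Tendsto (fun t => gTrend ν t / Real.log (Real.log (1 / t))) (𝓝[>] (0:ℝ)) (𝓝 1) := by
  have h := (tendsto_g_div_c ν).mul tendsto_c_div_LL
  rw [mul_one] at h
  apply Tendsto.congr' _ h
  filter_upwards [tendsto_c.eventually_gt_atTop 0] with t hc
  field_simp

lemma tendsto_g (ν : ℝ) (hν : 0 ≤ ν) : Tendsto (fun t : ℝ => gTrend ν t) (𝓝[>] 0) atTop := by
  apply tendsto_atTop_mono _ tendsto_c
  intro t
  have h1 : 0 ≤ Real.log (1 + (cTrend t)^2) := Real.log_nonneg (by nlinarith [sq_nonneg (cTrend t)])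
  have : 0 ≤ ν * Real.log (1 + (cTrend t)^2) := mul_nonneg hν h1
  simp only [gTrend]
  linarith

lemma part2_eq (ν : ℝ) (hν : 0 ≤ ν) : ∀ᶠ t in 𝓝[>] (0:ℝ),
    (Real.sqrt (gTrend ν t) * Real.exp (-gTrend ν t) / (t * (1 - t))) /
        (1 / (t * Real.log (1 / t) * Real.log (Real.log (1 / t)) ^ (2 * ν - 1/2)))
    = Real.sqrt (gTrend ν t / Real.log (Real.log (1/t)))
      * (Real.log (1/t) / (1 - Real.log (4*t*(1-t))))
      * ((Real.log (Real.log (1/t))^2 / (1 + (cTrend t)^2)) ^ ν)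
      * (1/(1-t)) := by
  filter_upwards [mem_eventually, tendsto_L.eventually_gt_atTop 0,
    tendsto_LL.eventually_gt_atTop 0, (tendsto_g ν hν).eventually_gt_atTop 0]
    with t ht hL hLL hg
  have hA0 : (0:ℝ) < 1 - Real.log (4*t*(1-t)) := lt_trans one_pos (A_gt_one t ht)
  have h1c : (0:ℝ) < 1 + cTrend t ^ 2 := by positivity
  set X1 := Real.log (gTrend ν t) with hX1
  set X2 := Real.log (Real.log (Real.log (1/t))) with hX2
  set X3 := Real.log (1 + cTrend t ^ 2) with hX3
  have hsqrt1 : Real.sqrt (gTrend ν t) = Real.exp (X1 * (1/2)) := by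
    rw [Real.sqrt_eq_rpow, Real.rpow_def_of_pos hg, hX1]
  have hsqrt2 : Real.sqrt (gTrend ν t / Real.log (Real.log (1/t)))
      = Real.exp (X1 * (1/2)) / Real.exp (X2 * (1/2)) := by
    rw [Real.sqrt_eq_rpow, Real.rpow_def_of_pos (div_pos hg hLL),
      Real.log_div hg.ne' hLL.ne', ← Real.exp_sub]
    congr 1
    ring
  have hexpc : Real.exp (cTrend t) = 1 - Real.log (4*t*(1-t)) := by
    simp only [cTrend]; exact Real.exp_log hA0
  have hexpg : Real.exp (-gTrend ν t)
      = (Real.exp (X3 * ν))⁻¹ / (1 - Real.log (4*t*(1-t))) := by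
    rw [show -gTrend ν t = -(X3 * ν) + -cTrend t by simp only [gTrend, hX3]; ring,
      Real.exp_add, Real.exp_neg, Real.exp_neg, hexpc]
    ring
  have hLLp : Real.log (Real.log (1/t)) ^ (2*ν - 1/2)
      = Real.exp (X2 * (2*ν)) / Real.exp (X2 * (1/2)) := by
    rw [Real.rpow_def_of_pos hLL, ← Real.exp_sub]
    congr 1
    ring
  have hT3 : (Real.log (Real.log (1/t))^2 / (1 + cTrend t ^2)) ^ ν
      = Real.exp (X2 * (2*ν)) / Real.exp (X3 * ν) := by
    rw [Real.rpow_def_of_pos (by positivity), Real.log_div (by positivity) h1c.ne',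
      Real.log_pow, ← Real.exp_sub]
    rw [← hX3]
    congr 1
    push_cast
    ring
  rw [hsqrt1, hsqrt2, hexpg, hLLp, hT3]
  have ht1 : (0:ℝ) < 1 - t := by have := ht.2; linarith
  set A := 1 - Real.log (4*t*(1-t)) with hA
  set Lt := Real.log (1/t) with hLt
  set E1 := Real.exp (X1 * (1/2)) with hE1
  set E2 := Real.exp (X2 * (1/2)) with hE2
  set E4 := Real.exp (X2 * (2*ν)) with hE4
  set E3 := Real.exp (X3 * ν) with hE3
  have hE1' : E1 ≠ 0 := Real.exp_ne_zero _
  have hE2' : E2 ≠ 0 := Real.exp_ne_zero _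
  have hE3' : E3 ≠ 0 := Real.exp_ne_zero _
  have hE4' : E4 ≠ 0 := Real.exp_ne_zero _
  rw [div_div_eq_mul_div]
  field_simp [ht.1.ne', ht1.ne', hA0.ne']

lemma part2 (ν : ℝ) (hν : 0 ≤ ν) :
    Tendsto
      (fun t =>
        (Real.sqrt (gTrend ν t) * Real.exp (-gTrend ν t) / (t * (1 - t))) /
          (1 / (t * Real.log (1 / t) * Real.log (Real.log (1 / t)) ^ (2 * ν - 1/2))))
      (𝓝[>] (0:ℝ)) (𝓝 1) := by
  have hT1 : Tendsto (fun t : ℝ => Real.sqrt (gTrend ν t / Real.log (Real.log (1/t))))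
      (𝓝[>] (0:ℝ)) (𝓝 1) := by
    have := (Real.continuous_sqrt.tendsto 1).comp (part1 ν)
    simpa [Function.comp_def] using this
  have hT2 : Tendsto (fun t : ℝ => Real.log (1/t) / (1 - Real.log (4*t*(1-t))))
      (𝓝[>] (0:ℝ)) (𝓝 1) := by
    have := tendsto_AdivL.inv₀ one_ne_zero
    rw [inv_one] at this
    apply this.congr
    intro t
    rw [inv_div]
  have hbase : Tendsto (fun t : ℝ => Real.log (Real.log (1/t))^2 / (1 + (cTrend t)^2))
      (𝓝[>] (0:ℝ)) (𝓝 1) := by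
    have h1 : Tendsto (fun t : ℝ => (1 + (cTrend t)^2) / Real.log (Real.log (1/t))^2)
        (𝓝[>] (0:ℝ)) (𝓝 1) := by
      have hinv : Tendsto (fun t : ℝ => (1 / Real.log (Real.log (1/t)))^2)
          (𝓝[>] (0:ℝ)) (𝓝 (0^2)) := (tendsto_LL.inv_tendsto_atTop.congr
            (fun t => (one_div _).symm)).pow 2
      have hsq : Tendsto (fun t : ℝ => (cTrend t / Real.log (Real.log (1/t)))^2)
          (𝓝[>] (0:ℝ)) (𝓝 (1^2)) := tendsto_c_div_LL.pow 2
      have h00 := hinv.add hsq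
      rw [show ((0:ℝ)^2 + 1^2) = 1 by norm_num] at h00
      apply h00.congr
      intro t
      rw [div_pow, div_pow, one_pow, ← add_div]
    have := h1.inv₀ one_ne_zero
    rw [inv_one] at this
    apply this.congr
    intro t
    rw [inv_div]
  have hT3 : Tendsto (fun t : ℝ => (Real.log (Real.log (1/t))^2 / (1 + (cTrend t)^2)) ^ ν)
      (𝓝[>] (0:ℝ)) (𝓝 1) := by
    have hc : ContinuousAt (fun x : ℝ => x ^ ν) 1 :=
      Real.continuousAt_rpow_const 1 ν (Or.inl one_ne_zero)
    have := hc.tendsto.comp hbase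
    simpa [Real.one_rpow, Function.comp_def] using this
  have hT4 : Tendsto (fun t : ℝ => 1/(1-t)) (𝓝[>] (0:ℝ)) (𝓝 1) := by
    have hc : ContinuousAt (fun t : ℝ => 1/(1-t)) 0 := by
      apply ContinuousAt.div continuousAt_const (by fun_prop)
      norm_num
    have h2 : Tendsto (fun t : ℝ => 1/(1-t)) (𝓝[>] (0:ℝ)) (𝓝 (1/(1-0))) :=
      hc.tendsto.mono_left nhdsWithin_le_nhds
    rw [show (1:ℝ)/(1-0) = 1 by norm_num] at h2
    exact h2
  have hall := ((hT1.mul hT2).mul hT3).mul hT4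
  rw [show ((1:ℝ)*1*1*1) = 1 by norm_num] at hall
  exact Tendsto.congr' ((part2_eq ν hν).mono fun t h => h.symm) hall

lemma himg : (fun u : ℝ => Real.exp (-Real.exp u)) '' (Ioi 1)
    = Ioo 0 (Real.exp (-Real.exp 1)) := by
  ext x
  constructor
  · rintro ⟨u, hu, rfl⟩
    exact ⟨Real.exp_pos _, Real.exp_lt_exp.2 (by
      simp only [neg_lt_neg_iff, Real.exp_lt_exp]; exact hu)⟩
  · rintro ⟨hx0, hx1⟩
    refine ⟨Real.log (-Real.log x), ?_, ?_⟩
    · have h1 : Real.log x < -Real.exp 1 := by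
        have := Real.log_lt_log hx0 hx1
        rwa [Real.log_exp] at this
      have h2 : Real.exp 1 < -Real.log x := by linarith
      have := Real.log_lt_log (Real.exp_pos 1) h2
      rwa [Real.log_exp] at this
    · have h1 : Real.log x < -Real.exp 1 := by
        have := Real.log_lt_log hx0 hx1
        rwa [Real.log_exp] at this
      have h2 : (0:ℝ) < -Real.log x := lt_trans (Real.exp_pos 1) (by linarith)
      simp only
      rw [Real.exp_log h2, neg_neg, Real.exp_log hx0]

lemma subst_int (p : ℝ) :
    IntegrableOn (fun t : ℝ => 1 / (t * Real.log (1/t) * Real.log (Real.log (1/t)) ^ p))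
      (Ioo 0 (Real.exp (-Real.exp 1))) ↔ 1 < p := by
  have hderiv : ∀ u ∈ Ioi (1:ℝ), HasDerivWithinAt (fun u : ℝ => Real.exp (-Real.exp u))
      (Real.exp (-Real.exp u) * (-Real.exp u)) (Ioi 1) u := by
    intro u _
    exact ((Real.hasDerivAt_exp (-Real.exp u)).comp u ((Real.hasDerivAt_exp u).neg)).hasDerivWithinAt
  have hinj : InjOn (fun u : ℝ => Real.exp (-Real.exp u)) (Ioi 1) := by
    intro u _ v _ h
    simp only at h
    exact Real.exp_injective (neg_injective (Real.exp_injective h))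
  rw [← himg, integrableOn_image_iff_integrableOn_abs_deriv_smul measurableSet_Ioi hderiv hinj]
  have hcongr : ∀ u ∈ Ioi (1:ℝ),
      |Real.exp (-Real.exp u) * (-Real.exp u)| •
        (1 / (Real.exp (-Real.exp u) * Real.log (1/Real.exp (-Real.exp u)) *
          Real.log (Real.log (1/Real.exp (-Real.exp u))) ^ p))
      = u ^ (-p) := by
    intro u hu
    have hu0 : (0:ℝ) < u := lt_trans one_pos hu
    have h1 : (1:ℝ) / Real.exp (-Real.exp u) = Real.exp (Real.exp u) := by
      rw [Real.exp_neg, one_div, inv_inv]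
    rw [h1, Real.log_exp, Real.log_exp, abs_mul, abs_neg, abs_of_pos (Real.exp_pos _),
      abs_of_pos (Real.exp_pos _), smul_eq_mul, Real.rpow_neg hu0.le]
    rw [one_div, mul_inv, mul_inv]
    have e1 : Real.exp (-Real.exp u) ≠ 0 := Real.exp_ne_zero _
    have e2 : Real.exp u ≠ 0 := Real.exp_ne_zero _
    field_simp
  rw [integrableOn_congr_fun hcongr measurableSet_Ioi,
    integrableOn_Ioi_rpow_iff zero_lt_one]
  constructor <;> intro h <;> linarith

lemma glue (F : ℝ → ℝ) (a b : ℝ) (ha : 0 < a) (hab : a ≤ b)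
    (hc : ContinuousOn F (Icc a b)) :
    IntegrableOn F (Ioo 0 b) ↔ IntegrableOn F (Ioo 0 a) := by
  constructor
  · exact fun h => h.mono_set (Ioo_subset_Ioo le_rfl hab)
  · intro h
    have h2 : IntegrableOn F (Icc a b) := hc.integrableOn_Icc
    exact (h.union h2).mono_set (fun x hx => by
      rcases le_or_gt a x with h' | h'
      · exact Or.inr ⟨h', hx.2.le⟩
      · exact Or.inl ⟨hx.1, h'⟩)

lemma comp_int {F G : ℝ → ℝ} {ε : ℝ} (hF : ContinuousOn F (Ioo 0 ε))
    (hbound : ∀ t ∈ Ioo (0:ℝ) ε, ‖F t‖ ≤ 2 * G t)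
    (hG : IntegrableOn G (Ioo 0 ε)) : IntegrableOn F (Ioo 0 ε) := by
  apply Integrable.mono' (hG.const_mul 2)
  · exact hF.aestronglyMeasurable measurableSet_Ioo
  · exact (ae_restrict_iff' measurableSet_Ioo).2 (ae_of_all _ hbound)

lemma contAt_f (ν : ℝ) : ∀ t ∈ Ioo (0:ℝ) 1, ContinuousAt
    (fun t => Real.sqrt (gTrend ν t) * Real.exp (-gTrend ν t) / (t * (1 - t))) t := by
  intro t ht
  have harg : (0:ℝ) < 4 * t * (1 - t) := by
    have h1 := ht.1; have h2 := ht.2; nlinarith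
  have hA0 : 4 * t * (1 - t) ≤ 1 := by nlinarith [sq_nonneg (1 - 2*t)]
  have hA : (0:ℝ) < 1 - Real.log (4 * t * (1 - t)) := by
    have := Real.log_nonpos harg.le hA0
    linarith
  have hinner : ContinuousAt (fun t : ℝ => 1 - Real.log (4*t*(1-t))) t :=
    continuousAt_const.sub (ContinuousAt.log (by fun_prop) harg.ne')
  have hcont_c : ContinuousAt cTrend t := hinner.log hA.ne'
  have hcont_g : ContinuousAt (gTrend ν) t := by
    apply ContinuousAt.add hcont_c
    apply ContinuousAt.mul continuousAt_const
    exact ContinuousAt.log (continuousAt_const.add (hcont_c.pow 2)) (by positivity)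
  apply ContinuousAt.div
  · exact (Real.continuous_sqrt.continuousAt.comp hcont_g).mul
      (Real.continuous_exp.continuousAt.comp hcont_g.neg)
  · fun_prop
  · have h1 := ht.1; have h2 := ht.2
    exact (by nlinarith : (0:ℝ) < t*(1-t)).ne'

lemma E0_facts : (0:ℝ) < Real.exp (-Real.exp 1) ∧ Real.exp (-Real.exp 1) < 1/2 := by
  refine ⟨Real.exp_pos _, ?_⟩
  have h1 : (2:ℝ) ≤ Real.exp 1 := by have := Real.add_one_le_exp (1:ℝ); linarith
  have h2 : Real.exp (-Real.exp 1) ≤ Real.exp (-2) := Real.exp_le_exp.2 (by linarith)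
  have h3 : (3:ℝ) ≤ Real.exp 2 := by have := Real.add_one_le_exp (2:ℝ); linarith
  have h4 : Real.exp (-2) < 1/2 := by
    rw [Real.exp_neg]
    have h5 : (Real.exp 2)⁻¹ ≤ 3⁻¹ := by
      apply inv_anti₀ (by norm_num) h3
    linarith
  linarith

lemma L_lb {t : ℝ} (ht0 : 0 < t) (ht1 : t ≤ Real.exp (-Real.exp 1)) :
    Real.exp 1 ≤ Real.log (1/t) := by
  have h1 : Real.log t ≤ -Real.exp 1 := by
    calc Real.log t ≤ Real.log (Real.exp (-Real.exp 1)) := Real.log_le_log ht0 ht1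
    _ = -Real.exp 1 := Real.log_exp _
  rw [one_div, Real.log_inv]
  linarith

lemma contAt_h (p : ℝ) {t : ℝ} (ht0 : 0 < t) (ht1 : t ≤ Real.exp (-Real.exp 1)) :
    ContinuousAt (fun t : ℝ => 1 / (t * Real.log (1/t) * Real.log (Real.log (1/t)) ^ p)) t := by
  have hL : (0:ℝ) < Real.log (1/t) := lt_of_lt_of_le (Real.exp_pos 1) (L_lb ht0 ht1)
  have hLL : (0:ℝ) < Real.log (Real.log (1/t)) := by
    have h1 : (1:ℝ) ≤ Real.log (Real.log (1/t)) := by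
      calc (1:ℝ) = Real.log (Real.exp 1) := (Real.log_exp 1).symm
      _ ≤ Real.log (Real.log (1/t)) := Real.log_le_log (Real.exp_pos 1) (L_lb ht0 ht1)
    linarith
  have hcL : ContinuousAt (fun t : ℝ => Real.log (1/t)) t :=
    ContinuousAt.log (continuousAt_const.div continuousAt_id ht0.ne') (by positivity)
  have hcLL : ContinuousAt (fun t : ℝ => Real.log (Real.log (1/t))) t := hcL.log hL.ne'
  apply ContinuousAt.div continuousAt_const
  · exact (continuousAt_id.mul hcL).mul (hcLL.rpow_const (Or.inl hLL.ne'))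
  · have h2 : (0:ℝ) < Real.log (Real.log (1/t)) ^ p := Real.rpow_pos_of_pos hLL p
    positivity

lemma LL_pos {t : ℝ} (ht0 : 0 < t) (ht1 : t ≤ Real.exp (-Real.exp 1)) :
    0 < Real.log (Real.log (1/t)) := by
  have h1 : (1:ℝ) ≤ Real.log (Real.log (1/t)) := by
    calc (1:ℝ) = Real.log (Real.exp 1) := (Real.log_exp 1).symm
    _ ≤ Real.log (Real.log (1/t)) := Real.log_le_log (Real.exp_pos 1) (L_lb ht0 ht1)
  linarith

lemma part3 (ν : ℝ) (hν : 0 < ν) :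
    IntegrableOn (fun t => Real.sqrt (gTrend ν t) * Real.exp (-gTrend ν t) / (t * (1 - t)))
        (Ioo (0:ℝ) (1/2)) ↔ 3/4 < ν := by
  set f := fun t : ℝ => Real.sqrt (gTrend ν t) * Real.exp (-gTrend ν t) / (t * (1 - t)) with hf
  set h := fun t : ℝ =>
    1 / (t * Real.log (1/t) * Real.log (Real.log (1/t)) ^ (2*ν - 1/2)) with hhdef
  obtain ⟨hE0pos, hE0half⟩ := E0_facts
  have hhpos : ∀ t : ℝ, 0 < t → t ≤ Real.exp (-Real.exp 1) → 0 < h t := by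
    intro t ht0 ht1
    have hL : (0:ℝ) < Real.log (1/t) := lt_of_lt_of_le (Real.exp_pos 1) (L_lb ht0 ht1)
    have hLL := LL_pos ht0 ht1
    have h2 : (0:ℝ) < Real.log (Real.log (1/t)) ^ (2*ν - 1/2) := Real.rpow_pos_of_pos hLL _
    simp only [hhdef]
    positivity
  have hfpos : ∀ t ∈ Ioo (0:ℝ) (1/2), 0 ≤ f t := by
    intro t ht
    have h1 := ht.1; have h2 := ht.2
    have h3 : (0:ℝ) < t * (1-t) := by nlinarith
    exact div_nonneg (mul_nonneg (Real.sqrt_nonneg _) (Real.exp_pos _).le) h3.le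
  have hev : ∀ᶠ t in 𝓝[>] (0:ℝ),
      t ∈ Ioo (0:ℝ) (1/2) ∧ f t ≤ 2 * h t ∧ h t ≤ 2 * f t := by
    have hr := (part2 ν hν.le).eventually
      (Ioo_mem_nhds (by norm_num : (1/2:ℝ) < 1) (by norm_num : (1:ℝ) < 2))
    have hE0ev : Ioo (0:ℝ) (Real.exp (-Real.exp 1)) ∈ 𝓝[>] (0:ℝ) :=
      Ioo_mem_nhdsGT_of_mem ⟨le_refl 0, hE0pos⟩
    filter_upwards [mem_eventually, hr, hE0ev] with t ht hrt0 htE0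
    have hrt : (1/2 : ℝ) < f t / h t ∧ f t / h t < 2 := hrt0
    have hh0 : 0 < h t := hhpos t htE0.1 htE0.2.le
    have hfe : f t = (f t / h t) * h t := (div_mul_cancel₀ _ hh0.ne').symm
    refine ⟨ht, ?_, ?_⟩
    · rw [hfe]
      have := mul_le_mul_of_nonneg_right hrt.2.le hh0.le
      linarith
    · have h1 : (1/2 : ℝ) * h t ≤ (f t / h t) * h t :=
        mul_le_mul_of_nonneg_right hrt.1.le hh0.le
      rw [← hfe] at h1
      linarith
  obtain ⟨u, hu, hsub⟩ := mem_nhdsGT_iff_exists_Ioo_subset.1 hev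
  set ε := min u (Real.exp (-Real.exp 1)) with hεdef
  have hεpos : 0 < ε := lt_min hu hE0pos
  have hεE0 : ε ≤ Real.exp (-Real.exp 1) := min_le_right _ _
  have hεhalf : ε ≤ 1/2 := le_trans hεE0 hE0half.le
  have hsubε : ∀ t ∈ Ioo (0:ℝ) ε,
      t ∈ Ioo (0:ℝ) (1/2) ∧ f t ≤ 2 * h t ∧ h t ≤ 2 * f t :=
    fun t htm => hsub (Ioo_subset_Ioo le_rfl (min_le_left _ _) htm)
  have hcf2 : ContinuousOn f (Icc ε (1/2)) := fun t ht =>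
    ((contAt_f ν t ⟨lt_of_lt_of_le hεpos ht.1, lt_of_le_of_lt ht.2 (by norm_num)⟩)).continuousWithinAt
  have hcfε : ContinuousOn f (Ioo 0 ε) := fun t ht =>
    (contAt_f ν t ⟨ht.1, lt_of_lt_of_le ht.2 (le_trans hεhalf (by norm_num))⟩).continuousWithinAt
  have hch2 : ContinuousOn h (Icc ε (Real.exp (-Real.exp 1))) := fun t ht =>
    (contAt_h _ (lt_of_lt_of_le hεpos ht.1) ht.2).continuousWithinAt
  have hchε : ContinuousOn h (Ioo 0 ε) := fun t ht =>
    (contAt_h _ ht.1 (le_trans ht.2.le hεE0)).continuousWithinAt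
  rw [glue f ε (1/2) hεpos hεhalf hcf2]
  have hiff : IntegrableOn f (Ioo 0 ε) ↔ IntegrableOn h (Ioo 0 ε) := by
    constructor
    · intro hint
      apply comp_int hchε _ hint
      intro t htm
      obtain ⟨ht2, _, hb2⟩ := hsubε t htm
      rw [Real.norm_eq_abs, abs_of_pos (hhpos t htm.1 (le_trans htm.2.le hεE0))]
      exact hb2
    · intro hint
      apply comp_int hcfε _ hint
      intro t htm
      obtain ⟨ht2, hb1, _⟩ := hsubε t htm
      rw [Real.norm_eq_abs, abs_of_nonneg (hfpos t ht2)]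
      exact hb1
  rw [hiff, ← glue h ε (Real.exp (-Real.exp 1)) hεpos hεE0 hch2, hhdef, subst_int]
  constructor <;> intro <;> linarith

/-- **Asymptotics of the trend `g_ν` at `0`:** `g_ν(t) ∼ ln ln(1/t)` and
`√(g_ν(t)) e^{−g_ν(t)}/(t(1−t)) ∼ 1/(t ln(1/t) (ln ln(1/t))^{2ν−1/2})` as `t → 0`;
consequently `∫_0^{1/2} √(g_ν(t)) e^{−g_ν(t)}/(t(1−t)) dt < ∞` iff `ν > 3/4`. -/
theorem gTrend_asymptotics_and_integrability (ν : ℝ) (hν : 0 < ν) :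
    Tendsto (fun t => gTrend ν t / Real.log (Real.log (1 / t)))
      (nhdsWithin 0 (Ioi 0)) (nhds 1) ∧
    Tendsto
      (fun t =>
        (Real.sqrt (gTrend ν t) * Real.exp (-gTrend ν t) / (t * (1 - t))) /
          (1 / (t * Real.log (1 / t) * Real.log (Real.log (1 / t)) ^ (2 * ν - 1/2))))
      (nhdsWithin 0 (Ioi 0)) (nhds 1) ∧
    (IntegrableOn (fun t => Real.sqrt (gTrend ν t) * Real.exp (-gTrend ν t) / (t * (1 - t)))
        (Ioo (0:ℝ) (1/2)) ↔ 3/4 < ν) :=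
  ⟨part1 ν, part2 ν hν.le, part3 ν hν⟩
end
end

section
/- Let n ≥ 1 be an integer and let g be a nonnegative continuous function on [1,∞) with g(t) increasing to ∞ as t → ∞ such that ∫_1^∞ (g(t))^{n/2} e^{−g(t)/2} / t · dt = ∞. Then there exists a nonnegative continuous nondecreasing function g_1 on [1,∞) with g_1(t) → ∞ as t → ∞ such that ∫_1^∞ (g(t) + g_1(t))^{n/2} e^{−(g(t)+g_1(t))/2} / t · dt = ∞. -/
open MeasureTheory Filter Set Real

noncomputable section

/-- **Key construction in the divergent case of the integral test (proof of Lemma A2).**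
If `g ≥ 0` is continuous and increasing to `∞` on `[1,∞)` with
`∫_1^∞ g(t)^{n/2} e^{−g(t)/2}/t dt = ∞`, then there is a nonnegative continuous
nondecreasing `g₁` on `[1,∞)` with `g₁(t) → ∞` such that
`∫_1^∞ (g(t)+g₁(t))^{n/2} e^{−(g(t)+g₁(t))/2}/t dt = ∞`. -/
theorem divergent_integral_test_perturbation
    (n : ℕ) (hn : 1 ≤ n) (g : ℝ → ℝ)
    (hg0 : ∀ t ∈ Ici (1:ℝ), 0 ≤ g t) (hgc : ContinuousOn g (Ici 1))
    (hgmono : ∀ s t : ℝ, 1 ≤ s → s ≤ t → g s ≤ g t)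
    (hgtop : Tendsto g atTop atTop)
    (hdiv : ¬ IntegrableOn (fun t => g t ^ ((n:ℝ)/2) * Real.exp (-g t / 2) / t) (Ici (1:ℝ))) :
    ∃ g1 : ℝ → ℝ,
      (∀ t ∈ Ici (1:ℝ), 0 ≤ g1 t) ∧ ContinuousOn g1 (Ici 1) ∧
      MonotoneOn g1 (Ici 1) ∧ Tendsto g1 atTop atTop ∧
      ¬ IntegrableOn
        (fun t => (g t + g1 t) ^ ((n:ℝ)/2) * Real.exp (-(g t + g1 t) / 2) / t)
        (Ici (1:ℝ)) := by
  classical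
  -- modified g, defined and nice on all of ℝ
  set G : ℝ → ℝ := fun t => g (max t 1) with hGdef
  have hGcont : Continuous G :=
    hgc.comp_continuous (continuous_id.max continuous_const) (fun x => le_max_right x 1)
  have hGnonneg : ∀ t, 0 ≤ G t := fun t => hg0 _ (le_max_right t 1)
  have hGeq : ∀ t ∈ Ici (1:ℝ), G t = g t := by
    intro t ht; simp only [hGdef]; rw [max_eq_left ht]
  have hexp_pos : (0:ℝ) < (n:ℝ)/2 := by
    have : (1:ℝ) ≤ (n:ℝ) := by exact_mod_cast hn
    linarith
  -- the integrand, modified off `Ici 1`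
  set f : ℝ → ℝ := fun s => G s ^ ((n:ℝ)/2) * Real.exp (-G s / 2) / max s 1 with hfdef
  have hmaxpos : ∀ s : ℝ, (0:ℝ) < max s 1 := fun s => lt_of_lt_of_le one_pos (le_max_right s 1)
  have hfcont : Continuous f := by
    have h1 : Continuous fun s : ℝ => G s ^ ((n:ℝ)/2) := by
      rw [continuous_iff_continuousAt]; intro x
      exact (Real.continuousAt_rpow_const _ _ (Or.inr hexp_pos.le)).comp hGcont.continuousAt
    exact (h1.mul ((hGcont.neg.div_const 2).rexp)).div
      (continuous_id.max continuous_const) (fun s => (hmaxpos s).ne')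
  have hfnonneg : ∀ s, 0 ≤ f s := fun s =>
    div_nonneg (mul_nonneg (Real.rpow_nonneg (hGnonneg s) _) (Real.exp_pos _).le) (hmaxpos s).le
  have hfeq : EqOn (fun t => g t ^ ((n:ℝ)/2) * Real.exp (-g t / 2) / t) f (Ici (1:ℝ)) := by
    intro t ht
    simp only [hfdef, hGeq t ht, max_eq_left (mem_Ici.mp ht)]
  have hdiv' : ¬ IntegrableOn f (Ici (1:ℝ)) := by
    intro h; exact hdiv ((integrableOn_congr_fun hfeq measurableSet_Ici).mpr h)
  have hfint : ∀ a b : ℝ, IntervalIntegrable f volume a b := fun a b =>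
    hfcont.intervalIntegrable a b
  -- the primitive
  set F : ℝ → ℝ := fun T => ∫ s in (1:ℝ)..T, f s with hFdef
  have hFcont : Continuous F := intervalIntegral.continuous_primitive hfint 1
  have hFmono : Monotone F := by
    intro a b hab
    have h := intervalIntegral.integral_add_adjacent_intervals (hfint 1 a) (hfint a b)
    have h2 : 0 ≤ ∫ s in a..b, f s :=
      intervalIntegral.integral_nonneg hab (fun u _ => hfnonneg u)
    simp only [hFdef]; rw [← h]; linarith
  have hFnonneg : ∀ t ∈ Ici (1:ℝ), 0 ≤ F t := by
    intro t ht
    have : F 1 = 0 := intervalIntegral.integral_same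
    rw [← this]; exact hFmono ht
  -- F tends to infinity
  have hFtop : Tendsto F atTop atTop := by
    by_contra hF
    obtain ⟨C, hC⟩ : ∃ C : ℝ, ∀ x, F x ≤ C := by
      by_contra hC
      push_neg at hC
      exact hF (hFmono.tendsto_atTop_atTop (fun b => (hC b).imp (fun a ha => ha.le)))
    apply hdiv'
    rw [integrableOn_Ici_iff_integrableOn_Ioi]
    apply integrableOn_Ioi_of_intervalIntegral_norm_bounded C 1
      (b := fun i : ℕ => (i:ℝ) + 1) (fun i => hfcont.integrableOn_Ioc)
      (tendsto_atTop_add_const_right _ 1 tendsto_natCast_atTop_atTop)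
    filter_upwards with i
    have : (∫ x in (1:ℝ)..((i:ℝ)+1), ‖f x‖) = F ((i:ℝ)+1) := by
      simp only [hFdef]
      apply intervalIntegral.integral_congr
      intro x _; exact Real.norm_of_nonneg (hfnonneg x)
    rw [this]; exact hC _
  -- the perturbation
  refine ⟨fun t => 2 * Real.log (Real.log (Real.exp 1 + F t)), ?_, ?_, ?_, ?_, ?_⟩
  case _ =>
    intro t ht
    have h1 : (1:ℝ) ≤ Real.log (Real.exp 1 + F t) := by
      have h := Real.log_le_log (Real.exp_pos 1) (show Real.exp 1 ≤ Real.exp 1 + F t by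
        linarith [hFnonneg t ht])
      rwa [Real.log_exp] at h
    have h2 := Real.log_nonneg h1
    dsimp only
    linarith
  case _ =>
    have hpos : ∀ t ∈ Ici (1:ℝ), (0:ℝ) < Real.exp 1 + F t := by
      intro t ht; linarith [hFnonneg t ht, Real.exp_pos 1]
    have hlogpos : ∀ t ∈ Ici (1:ℝ), (0:ℝ) < Real.log (Real.exp 1 + F t) := by
      intro t ht
      have h := Real.log_le_log (Real.exp_pos 1) (show Real.exp 1 ≤ Real.exp 1 + F t by
        linarith [hFnonneg t ht])
      rw [Real.log_exp] at h
      linarith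
    exact (continuousOn_const.mul
      (((continuousOn_const.add hFcont.continuousOn).log
        (fun t ht => (hpos t ht).ne')).log (fun t ht => (hlogpos t ht).ne')))
  case _ =>
    intro s hs t ht hst
    have h1 : Real.log (Real.exp 1 + F s) ≤ Real.log (Real.exp 1 + F t) :=
      Real.log_le_log (by linarith [hFnonneg s hs, Real.exp_pos 1]) (by linarith [hFmono hst])
    have h2 : Real.log (Real.log (Real.exp 1 + F s)) ≤ Real.log (Real.log (Real.exp 1 + F t)) := by
      apply Real.log_le_log _ h1
      have h := Real.log_le_log (Real.exp_pos 1) (show Real.exp 1 ≤ Real.exp 1 + F s by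
        linarith [hFnonneg s hs])
      rw [Real.log_exp] at h
      linarith
    dsimp only
    linarith
  case _ =>
    apply Tendsto.const_mul_atTop two_pos
    exact Real.tendsto_log_atTop.comp (Real.tendsto_log_atTop.comp
      (tendsto_atTop_add_const_left _ _ hFtop))
  case _ =>
    intro hint
    set g1 : ℝ → ℝ := fun t => 2 * Real.log (Real.log (Real.exp 1 + F t)) with hg1def
    set ℓ : ℝ → ℝ := fun t => f t / (Real.exp 1 + F t) with hldef
    have hEpos : ∀ t ∈ Ici (1:ℝ), (0:ℝ) < Real.exp 1 + F t := by
      intro t ht; linarith [hFnonneg t ht, Real.exp_pos 1]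
    have hlog1 : ∀ t ∈ Ici (1:ℝ), (1:ℝ) ≤ Real.log (Real.exp 1 + F t) := by
      intro t ht
      have h := Real.log_le_log (Real.exp_pos 1) (show Real.exp 1 ≤ Real.exp 1 + F t by
        linarith [hFnonneg t ht])
      rwa [Real.log_exp] at h
    -- pointwise lower bound : ℓ ≤ integrand on Ici 1
    have hle : ∀ t ∈ Ici (1:ℝ), ℓ t ≤
        (g t + g1 t) ^ ((n:ℝ)/2) * Real.exp (-(g t + g1 t) / 2) / t := by
      intro t ht
      have ht1 : (1:ℝ) ≤ t := ht
      have htpos : (0:ℝ) < t := lt_of_lt_of_le one_pos ht1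
      have hg1nn : 0 ≤ g1 t := by
        have := Real.log_nonneg (hlog1 t ht); simp only [hg1def]; linarith
      have hgt : 0 ≤ g t := hg0 t ht
      have h1 : g t ^ ((n:ℝ)/2) ≤ (g t + g1 t) ^ ((n:ℝ)/2) :=
        Real.rpow_le_rpow hgt (by linarith) hexp_pos.le
      have h2 : Real.exp (-(g t + g1 t) / 2) =
          Real.exp (-g t / 2) * Real.exp (-(g1 t) / 2) := by
        rw [← Real.exp_add]; ring_nf
      have h3 : Real.exp (-(g1 t) / 2) = 1 / Real.log (Real.exp 1 + F t) := by
        simp only [hg1def]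
        rw [show -(2 * Real.log (Real.log (Real.exp 1 + F t))) / 2
            = -Real.log (Real.log (Real.exp 1 + F t)) by ring]
        rw [Real.exp_neg, Real.exp_log (by linarith [hlog1 t ht])]
        rw [one_div]
      have h4 : 1 / (Real.exp 1 + F t) ≤ 1 / Real.log (Real.exp 1 + F t) := by
        apply one_div_le_one_div_of_le (by linarith [hlog1 t ht])
        exact Real.log_le_sub_one_of_pos (hEpos t ht) |>.trans (by linarith)
      have hfval : f t = g t ^ ((n:ℝ)/2) * Real.exp (-g t / 2) / t := (hfeq ht).symm
      simp only [hldef]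
      rw [hfval, h2]
      have key : g t ^ ((n:ℝ)/2) * Real.exp (-g t / 2) / t / (Real.exp 1 + F t)
          = g t ^ ((n:ℝ)/2) * Real.exp (-g t / 2) * (1 / (Real.exp 1 + F t)) / t := by ring
      rw [key]
      have hnn : 0 ≤ g t ^ ((n:ℝ)/2) * Real.exp (-g t / 2) :=
        mul_nonneg (Real.rpow_nonneg hgt _) (Real.exp_pos _).le
      apply (div_le_div_iff_of_pos_right htpos).mpr
      calc g t ^ ((n:ℝ)/2) * Real.exp (-g t / 2) * (1 / (Real.exp 1 + F t))
          ≤ g t ^ ((n:ℝ)/2) * Real.exp (-g t / 2) * (1 / Real.log (Real.exp 1 + F t)) := by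
            apply mul_le_mul_of_nonneg_left h4 hnn
        _ = g t ^ ((n:ℝ)/2) * (Real.exp (-g t / 2) * Real.exp (-(g1 t) / 2)) := by
            rw [h3]; ring
        _ ≤ (g t + g1 t) ^ ((n:ℝ)/2) * (Real.exp (-g t / 2) * Real.exp (-(g1 t) / 2)) := by
            apply mul_le_mul_of_nonneg_right h1
            positivity
    have hlnonneg : ∀ t ∈ Ici (1:ℝ), 0 ≤ ℓ t := by
      intro t ht
      exact div_nonneg (hfnonneg t) (hEpos t ht).le
    have hlcont : ContinuousOn ℓ (Ici 1) := by
      exact hfcont.continuousOn.div (continuousOn_const.add hFcont.continuousOn)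
        (fun t ht => (hEpos t ht).ne')
    -- ℓ is integrable on Ici 1 since it is dominated by the integrand
    have hlint : IntegrableOn ℓ (Ici (1:ℝ)) := by
      apply Integrable.mono hint (hlcont.aestronglyMeasurable measurableSet_Ici)
      rw [ae_restrict_iff' measurableSet_Ici]
      filter_upwards with t ht
      rw [Real.norm_of_nonneg (hlnonneg t ht)]
      refine (hle t ht).trans (le_abs_self _)
    -- but its integral over [1,T] is log(e + F T) - 1 → ∞, contradiction
    have hFTC : ∀ T : ℝ, 1 ≤ T → (∫ t in (1:ℝ)..T, ℓ t)
        = Real.log (Real.exp 1 + F T) - Real.log (Real.exp 1 + F 1) := by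
      intro T hT
      have hderiv : ∀ t ∈ Set.uIcc (1:ℝ) T,
          HasDerivAt (fun u => Real.log (Real.exp 1 + F u)) (ℓ t) t := by
        intro t htm
        have ht1 : (1:ℝ) ≤ t := by
          rcases Set.mem_uIcc.mp htm with h | h
          · exact h.1
          · linarith [h.1, h.2]
        have hF' : HasDerivAt F (f t) t :=
          intervalIntegral.integral_hasDerivAt_right (hfint 1 t)
            hfcont.stronglyMeasurable.stronglyMeasurableAtFilter hfcont.continuousAt
        have h0 : HasDerivAt (fun u => Real.exp 1 + F u) (f t) t := hF'.const_add _
        have := h0.log (hEpos t ht1).ne'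
        simpa [hldef] using this
      have hii : IntervalIntegrable ℓ volume 1 T := by
        apply ContinuousOn.intervalIntegrable
        apply hlcont.mono
        rw [Set.uIcc_of_le hT]
        exact fun x hx => hx.1
      rw [intervalIntegral.integral_eq_sub_of_hasDerivAt hderiv hii]
    -- conclude: the primitive of ℓ is bounded, but log(e + F T) is unbounded
    have hbd : ∀ T : ℝ, 1 ≤ T → (∫ t in (1:ℝ)..T, ℓ t) ≤ ∫ t in Ici (1:ℝ), ℓ t := by
      intro T hT
      rw [intervalIntegral.integral_of_le hT]
      apply setIntegral_mono_set hlint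
      · filter_upwards [ae_restrict_mem measurableSet_Ici] with t ht
        exact hlnonneg t ht
      · filter_upwards with t ht
        exact ht.1.le
    have htop : Tendsto (fun T => Real.log (Real.exp 1 + F T) - Real.log (Real.exp 1 + F 1))
        atTop atTop := by
      apply tendsto_atTop_add_const_right
      exact Real.tendsto_log_atTop.comp (tendsto_atTop_add_const_left _ _ hFtop)
    obtain ⟨T, hTgt, hT1⟩ := ((htop.eventually
      (eventually_gt_atTop ((∫ t in Ici (1:ℝ), ℓ t)))).and (eventually_ge_atTop (1:ℝ))).exists
    rw [← hFTC T hT1] at hTgt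
    exact absurd (hbd T hT1) (not_le.mpr hTgt)
end
end
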